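/- Suppose 2^{<κ} = κ and H is an ideal on P_κ(λ) with cof(H) < non_κ(weakly selective). Then for every f : κ → κ and every A ∈ H⁺ there is B ∈ H⁺ ∩ P(A) such that f(∪(a∩κ)) ⊆ b for all a, b ∈ B with ∪(a∩κ) < ∪(b∩κ) (the ordinal f(∪(a∩κ)) being identified with its set of predecessors). -/

import Mathlib

open Cardinal Set

namespace PaperFormal

noncomputable section

/-- The least (small) cardinality of a family `F : Set X` satisfying `P`. -/
def leastCard {X : Type 1} (P : Set X → Prop) : Cardinal.{0} :=
  sInf {c : Cardinal.{0} | ∃ F : Set X, P F ∧ Cardinal.lift.{1} c = #F}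

/-- The collection of (codings of) functions from `κ` to `κ`. -/
def funOn (κ : Cardinal.{0}) : Set (Ordinal.{0} → Ordinal.{0}) :=
  {f | ∀ α < κ.ord, f α < κ.ord}

/-- The unequality number `U_κ`. -/
def uneq (κ : Cardinal.{0}) : Cardinal.{0} :=
  leastCard fun F : Set (Ordinal.{0} → Ordinal.{0}) => F ⊆ funOn κ ∧
    ∀ g ∈ funOn κ, ∃ f ∈ F, {α | α < κ.ord ∧ f α = g α} = ∅

/-- The dominating number `d_κ`. -/
def domNum (κ : Cardinal.{0}) : Cardinal.{0} :=
  leastCard fun F : Set (Ordinal.{0} → Ordinal.{0}) => F ⊆ funOn κ ∧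
    ∀ g ∈ funOn κ, ∃ f ∈ F, ∀ α < κ.ord, g α < f α

/-- The number `d̄_κ`. -/
def domBar (κ : Cardinal.{0}) : Cardinal.{0} :=
  leastCard fun X : Set (Ordinal.{0} → Ordinal.{0}) => X ⊆ funOn κ ∧
    ∀ g ∈ funOn κ, ∃ x ⊆ X, x.Nonempty ∧ #x < Cardinal.lift.{1} κ ∧
      ∀ α < κ.ord, g α < sSup {o | ∃ f ∈ x, f α = o}

/-- The generalized Cantor space `^ρ2`, with points coded as subsets of `Iio ρ.ord`. -/
def cantor (ρ : Cardinal.{0}) : Set (Set Ordinal.{0}) := {x | x ⊆ Iio ρ.ord}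

/-- A forcing condition: a pair `(a, t)` with `t ⊆ a ⊆ Iio ρ.ord` and `|a| < ν`. -/
def IsCond (ν ρ : Cardinal.{0}) (a t : Set Ordinal.{0}) : Prop :=
  a ⊆ Iio ρ.ord ∧ t ⊆ a ∧ #a < Cardinal.lift.{1} ν

/-- The basic open set determined by a condition. -/
def basicOpen (ρ : Cardinal.{0}) (a t : Set Ordinal.{0}) : Set (Set Ordinal.{0}) :=
  {x | x ⊆ Iio ρ.ord ∧ x ∩ a = t}

/-- Dense open subsets of `^ρ2` (for the `<ν`-support topology). -/
def DenseOpen (ν ρ : Cardinal.{0}) (D : Set (Set Ordinal.{0})) : Prop :=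
  D ⊆ cantor ρ ∧
  (∀ x ∈ D, ∃ a t, IsCond ν ρ a t ∧ x ∈ basicOpen ρ a t ∧ basicOpen ρ a t ⊆ D) ∧
  (∀ a t, IsCond ν ρ a t → (basicOpen ρ a t ∩ D).Nonempty)

/-- Members of `M_{ν,ρ}`. -/
def Meager (ν ρ : Cardinal.{0}) (W : Set (Set Ordinal.{0})) : Prop :=
  W ⊆ cantor ρ ∧ ∃ X : Set (Set (Set Ordinal.{0})), X.Nonempty ∧
    #X ≤ Cardinal.lift.{1} ν ∧ (∀ D ∈ X, DenseOpen ν ρ D) ∧ W ∩ ⋂₀ X = ∅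

/-- The covering number for category `cov(M_{ν,ρ})`. -/
def covM (ν ρ : Cardinal.{0}) : Cardinal.{0} :=
  leastCard fun Y : Set (Set (Set Ordinal.{0})) =>
    (∀ W ∈ Y, Meager ν ρ W) ∧ ⋃₀ Y = cantor ρ

/-- A (`κ`-complete) ideal on `κ`. -/
structure IdealK (κ : Cardinal.{0}) where
  mem : Set (Set Ordinal.{0})
  subset_iio : ∀ A ∈ mem, A ⊆ Iio κ.ord
  singleton_mem : ∀ α < κ.ord, {α} ∈ mem
  subset_mem : ∀ A ∈ mem, ∀ B ⊆ A, B ∈ mem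
  sUnion_mem : ∀ X : Set (Set Ordinal.{0}), X ⊆ mem → #X < Cardinal.lift.{1} κ → ⋃₀ X ∈ mem
  ne_top : Iio κ.ord ∉ mem

/-- `J⁺`, the sets (⊆ κ) not in the ideal. -/
def IdealK.plus {κ : Cardinal.{0}} (J : IdealK κ) : Set (Set Ordinal.{0}) :=
  {A | A ⊆ Iio κ.ord ∧ A ∉ J.mem}

/-- `cof(J)`. -/
def IdealK.cof {κ : Cardinal.{0}} (J : IdealK κ) : Cardinal.{0} :=
  leastCard fun X : Set (Set Ordinal.{0}) =>
    X ⊆ J.mem ∧ ∀ A, A ∈ J.mem ↔ ∃ B ∈ X, A ⊆ B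

/-- `cof̄(J)`. -/
def IdealK.cofBar {κ : Cardinal.{0}} (J : IdealK κ) : Cardinal.{0} :=
  leastCard fun X : Set (Set Ordinal.{0}) =>
    X ⊆ J.mem ∧ ∀ A ∈ J.mem, ∃ x ⊆ X, #x < Cardinal.lift.{1} κ ∧ A ⊆ ⋃₀ x

/-- `non_κ(P)`. -/
def nonK (κ : Cardinal.{0}) (P : IdealK κ → Prop) : Cardinal.{0} :=
  sInf {c | ∃ J : IdealK κ, J.cof = c ∧ ¬ P J}

/-- `non̄_κ(P)`. -/
def nonBarK (κ : Cardinal.{0}) (P : IdealK κ → Prop) : Cardinal.{0} :=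
  sInf {c | ∃ J : IdealK κ, J.cofBar = c ∧ ¬ P J}

/-- Weak `P`-point. -/
def WeakPPoint {κ : Cardinal.{0}} (J : IdealK κ) : Prop :=
  ∀ A ∈ J.plus, ∀ f : Ordinal.{0} → Ordinal.{0},
    (∀ α ∈ A, f α < κ.ord) → (∀ β, {α ∈ A | f α = β} ∈ J.mem) →
    ∃ B ∈ J.plus, B ⊆ A ∧ ∀ β, #{α ∈ B | f α = β} < Cardinal.lift.{1} κ

/-- Weak `Q`-point. -/
def WeakQPoint {κ : Cardinal.{0}} (J : IdealK κ) : Prop :=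
  ∀ A ∈ J.plus, ∀ g ∈ funOn κ,
    ∃ B ∈ J.plus, B ⊆ A ∧ ∀ α ∈ B, ∀ β ∈ B, α < β → g α < β

/-- Weakly selective ideal. -/
def WeaklySelective {κ : Cardinal.{0}} (J : IdealK κ) : Prop :=
  WeakPPoint J ∧ WeakQPoint J

/-- Weak semi-`Q`-point. -/
def WeakSemiQPoint {κ : Cardinal.{0}} (J : IdealK κ) : Prop :=
  ∀ A ∈ J.plus, ∀ f : Ordinal.{0} → Ordinal.{0},
    (∀ α ∈ A, f α < κ.ord) →
    (∀ β, #{α ∈ A | f α = β} < Cardinal.lift.{1} κ) →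
    ∃ C ∈ J.plus, C ⊆ A ∧ ∀ β < κ.ord, #{α ∈ C | f α = β} ≤ Cardinal.lift.{1} β.card

/-- `P_κ(λ)`, coded as the small subsets of `Iio λ.ord`. -/
def smallSet (κ lam : Cardinal.{0}) : Set (Set Ordinal.{0}) :=
  {a | a ⊆ Iio lam.ord ∧ #a < Cardinal.lift.{1} κ}

/-- The ideal `I_{κ,λ}` of noncofinal subsets of `P_κ(λ)`. -/
def Ikl (κ lam : Cardinal.{0}) : Set (Set (Set Ordinal.{0})) :=
  {A | A ⊆ smallSet κ lam ∧ ∃ a ∈ smallSet κ lam, ∀ b ∈ A, ¬ a ⊆ b}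

/-- A (`κ`-complete fine) ideal on `P_κ(λ)`. -/
structure IdealP (κ lam : Cardinal.{0}) where
  mem : Set (Set (Set Ordinal.{0}))
  subset_pk : ∀ A ∈ mem, A ⊆ smallSet κ lam
  fine : Ikl κ lam ⊆ mem
  subset_mem : ∀ A ∈ mem, ∀ B ⊆ A, B ∈ mem
  sUnion_mem : ∀ X : Set (Set (Set Ordinal.{0})), X ⊆ mem →
    #X < Cardinal.lift.{1} κ → ⋃₀ X ∈ mem
  ne_top : smallSet κ lam ∉ mem

/-- `H⁺` computed from the underlying collection `Hm` of an ideal on `P_κ(λ)`. -/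
def plusOf (κ lam : Cardinal.{0}) (Hm : Set (Set (Set Ordinal.{0}))) :
    Set (Set (Set Ordinal.{0})) :=
  {A | A ⊆ smallSet κ lam ∧ A ∉ Hm}

/-- `H⁺`. -/
def IdealP.plus {κ lam : Cardinal.{0}} (H : IdealP κ lam) : Set (Set (Set Ordinal.{0})) :=
  plusOf κ lam H.mem

/-- `cof(H)`. -/
def IdealP.cof {κ lam : Cardinal.{0}} (H : IdealP κ lam) : Cardinal.{0} :=
  leastCard fun X : Set (Set (Set Ordinal.{0})) =>
    X ⊆ H.mem ∧ ∀ A, A ∈ H.mem ↔ ∃ B ∈ X, A ⊆ B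

/-- `cof̄(H)`. -/
def IdealP.cofBar {κ lam : Cardinal.{0}} (H : IdealP κ lam) : Cardinal.{0} :=
  leastCard fun X : Set (Set (Set Ordinal.{0})) =>
    X ⊆ H.mem ∧ ∀ A ∈ H.mem, ∃ x ⊆ X, #x < Cardinal.lift.{1} κ ∧ A ⊆ ⋃₀ x

/-- `d^κ_{κ,λ}`. -/
def domP (κ lam : Cardinal.{0}) : Cardinal.{0} :=
  leastCard fun F : Set (Ordinal.{0} → Set Ordinal.{0}) =>
    (∀ f ∈ F, ∀ α < κ.ord, f α ∈ smallSet κ lam) ∧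
    ∀ g : Ordinal.{0} → Set Ordinal.{0}, (∀ α < κ.ord, g α ∈ smallSet κ lam) →
      ∃ f ∈ F, ∀ α < κ.ord, g α ⊆ f α

/-- A maximal almost disjoint family of size `≥ κ` for `H` (a member of `M_H^{≥κ}`). -/
def IsMad {κ lam : Cardinal.{0}} (H : IdealP κ lam) (Q : Set (Set (Set Ordinal.{0}))) : Prop :=
  Q ⊆ H.plus ∧ Cardinal.lift.{1} κ ≤ #Q ∧
  (∀ A ∈ Q, ∀ B ∈ Q, A ≠ B → A ∩ B ∈ H.mem) ∧
  ∀ C ∈ H.plus, ∃ A ∈ Q, A ∩ C ∈ H.plus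

/-- The (small) cardinal `c` with `lift c = c'`, used to pull `λ^{<κ} = |P_κ(λ)|` down. -/
def downCard (c : Cardinal.{1}) : Cardinal.{0} :=
  sInf {d : Cardinal.{0} | Cardinal.lift.{1} d = c}

open Classical in
/-- The number `a_H`. -/
def aNum {κ lam : Cardinal.{0}} (H : IdealP κ lam) : Cardinal.{0} :=
  if ∃ Q, IsMad H Q then sInf {c | ∃ Q, IsMad H Q ∧ Cardinal.lift.{1} c = #Q}
  else 2 ^ Order.succ (downCard #(smallSet κ lam))

/-- Weak `π`-point. -/
def WeakPiPoint {κ lam : Cardinal.{0}} (H : IdealP κ lam) : Prop :=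
  ∀ f : Ordinal.{0} → Set (Set Ordinal.{0}), (∀ α < κ.ord, f α ∈ H.mem) →
    ∀ A ∈ H.plus, ∃ B ∈ H.plus, B ⊆ A ∧ ∀ α < κ.ord, B ∩ f α ∈ Ikl κ lam

/-- `∪(a ∩ κ)`. -/
def supK (κ : Cardinal.{0}) (a : Set Ordinal.{0}) : Ordinal.{0} :=
  sSup (a ∩ Iio κ.ord)

/-- The relation `a ≺ b`. -/
def prec (κ : Cardinal.{0}) (a b : Set Ordinal.{0}) : Prop :=
  a ⊆ b ∧ supK κ a < supK κ b

/-- `[A]_κ²`. -/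
def pairsK (κ : Cardinal.{0}) (A : Set (Set Ordinal.{0})) : Set (Ordinal.{0} × Set Ordinal.{0}) :=
  {p | ∃ a ∈ A, ∃ b ∈ A, supK κ a < supK κ b ∧ p = (supK κ a, b)}

/-- `[A]_≺²`. -/
def pairsPrec (κ : Cardinal.{0}) (A : Set (Set Ordinal.{0})) :
    Set (Ordinal.{0} × Set Ordinal.{0}) :=
  {p | ∃ a ∈ A, ∃ b ∈ A, prec κ a b ∧ p = (supK κ a, b)}

/-- `[A]_{κ,κ}²`. -/
def pairsKK (κ : Cardinal.{0}) (A : Set (Set Ordinal.{0})) : Set (Ordinal.{0} × Ordinal.{0}) :=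
  {p | ∃ a ∈ A, ∃ b ∈ A, supK κ a < supK κ b ∧ p = (supK κ a, supK κ b)}

/-- `S` is a set of ordinals of order type `α`. -/
def OrdType (S : Set Ordinal.{0}) (α : Ordinal.{0}) : Prop :=
  ∃ e : Ordinal.{0} → Ordinal.{0},
    (∀ i < α, ∀ j < α, i < j → e i < e j) ∧ e '' Iio α = S

/-- `(B, ≺)` has order type `α`. -/
def OrdTypePrec (κ : Cardinal.{0}) (B : Set (Set Ordinal.{0})) (α : Ordinal.{0}) : Prop :=
  ∃ e : Ordinal.{0} → Set Ordinal.{0},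
    (∀ i < α, ∀ j < α, i < j → prec κ (e i) (e j)) ∧ e '' Iio α = B

/-- The partition relation `κ → (κ, θ)²`. -/
def ArrowKTheta (κ : Cardinal.{0}) (θ : Ordinal.{0}) : Prop :=
  ∀ f : Ordinal.{0} → Ordinal.{0} → Fin 2, ∃ A ⊆ Iio κ.ord,
    (OrdType A κ.ord ∧ ∀ α ∈ A, ∀ β ∈ A, α < β → f α β = 0) ∨
    (OrdType A θ ∧ ∀ α ∈ A, ∀ β ∈ A, α < β → f α β = 1)

/-- `κ` is weakly compact. -/
def WeaklyCompact (κ : Cardinal.{0}) : Prop :=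
  ∀ f : Ordinal.{0} → Ordinal.{0} → Fin 2, ∃ A ⊆ Iio κ.ord,
    OrdType A κ.ord ∧ ∃ i, ∀ α ∈ A, ∀ β ∈ A, α < β → f α β = i

/-- The partition relation `J⁺ → (J⁺, α)²` for an ideal on `κ`. -/
def ArrowJ {κ : Cardinal.{0}} (J : IdealK κ) (α : Ordinal.{0}) : Prop :=
  ∀ A ∈ J.plus, ∀ f : Ordinal.{0} → Ordinal.{0} → Fin 2,
    ∃ B ⊆ A, (B ∈ J.plus ∧ ∀ β ∈ B, ∀ γ ∈ B, β < γ → f β γ = 0) ∨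
             (OrdType B α ∧ ∀ β ∈ B, ∀ γ ∈ B, β < γ → f β γ = 1)

/-- The square bracket relation `J⁺ → [J⁺]_ρ²` for an ideal on `κ`. -/
def SqBrJ {κ : Cardinal.{0}} (J : IdealK κ) (ρ : Cardinal.{0}) : Prop :=
  ∀ A ∈ J.plus, ∀ f : Ordinal.{0} → Ordinal.{0} → Ordinal.{0},
    (∀ β ∈ A, ∀ γ ∈ A, β < γ → f β γ < ρ.ord) →
    ∃ B ∈ J.plus, B ⊆ A ∧ {ξ | ∃ β ∈ B, ∃ γ ∈ B, β < γ ∧ f β γ = ξ} ≠ Iio ρ.ord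

/-- `H⁺ →_κ (H⁺, α)²`. -/
def ArrowP (κ lam : Cardinal.{0}) (Hm : Set (Set (Set Ordinal.{0}))) (α : Ordinal.{0}) : Prop :=
  ∀ F : Ordinal.{0} → Set Ordinal.{0} → Fin 2, ∀ A ∈ plusOf κ lam Hm,
    ∃ B ⊆ A, (B ∈ plusOf κ lam Hm ∧ ∀ p ∈ pairsK κ B, F p.1 p.2 = 0) ∨
             (OrdTypePrec κ B α ∧ ∀ p ∈ pairsK κ B, F p.1 p.2 = 1)

/-- `H⁺ →_{κ,κ} (H⁺, α)²`. -/
def ArrowPKK (κ lam : Cardinal.{0}) (Hm : Set (Set (Set Ordinal.{0}))) (α : Ordinal.{0}) : Prop :=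
  ∀ F : Ordinal.{0} → Ordinal.{0} → Fin 2, ∀ A ∈ plusOf κ lam Hm,
    ∃ B ⊆ A, (B ∈ plusOf κ lam Hm ∧ ∀ p ∈ pairsKK κ B, F p.1 p.2 = 0) ∨
             (OrdTypePrec κ B α ∧ ∀ p ∈ pairsKK κ B, F p.1 p.2 = 1)

/-- `H⁺ →_{κ,κ} (H⁺; α)²`. -/
def ArrowPKKsemi (κ lam : Cardinal.{0}) (Hm : Set (Set (Set Ordinal.{0}))) (α : Ordinal.{0}) :
    Prop :=
  ∀ F : Ordinal.{0} → Ordinal.{0} → Fin 2, ∀ A ∈ plusOf κ lam Hm,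
    ∃ B ⊆ A, (B ∈ plusOf κ lam Hm ∧ ∀ p ∈ pairsKK κ B, F p.1 p.2 = 0) ∨
             (OrdType {o | ∃ a ∈ B, supK κ a = o} α ∧ ∀ p ∈ pairsKK κ B, F p.1 p.2 = 1)

/-- `H⁺ →_κ (H⁺)²`. -/
def ArrowPConst (κ lam : Cardinal.{0}) (Hm : Set (Set (Set Ordinal.{0}))) : Prop :=
  ∀ F : Ordinal.{0} → Set Ordinal.{0} → Fin 2, ∀ A ∈ plusOf κ lam Hm,
    ∃ B ∈ plusOf κ lam Hm, B ⊆ A ∧ ∃ i, ∀ p ∈ pairsK κ B, F p.1 p.2 = i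

/-- `H⁺ →_{κ,κ} [H⁺]_ρ²`. -/
def SqBrPKK (κ lam : Cardinal.{0}) (Hm : Set (Set (Set Ordinal.{0}))) (ρ : Cardinal.{0}) : Prop :=
  ∀ F : Ordinal.{0} → Ordinal.{0} → Ordinal.{0},
    (∀ α β : Ordinal.{0}, α < β → β < κ.ord → F α β < ρ.ord) →
    ∀ A ∈ plusOf κ lam Hm, ∃ B ∈ plusOf κ lam Hm, B ⊆ A ∧
      {ξ | ∃ p ∈ pairsKK κ B, F p.1 p.2 = ξ} ≠ Iio ρ.ord

/-- The class `K(κ,λ)`. -/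
def Kset (κ lam : Cardinal.{0}) : Set Cardinal.{0} :=
  {σ | lam ≤ σ ∧ ∃ T ⊆ smallSet κ lam, Cardinal.lift.{1} σ = #T ∧
    ∀ a ∈ smallSet κ lam, #{t ∈ T | t ⊆ a} < Cardinal.lift.{1} κ}

end

end PaperFormal

/-!
Write `m(a)` for the least ordinal below `κ` missing from `a`, and `s(a) = ∪(a ∩ κ)`. The fibres of
both maps lie in noncofinal sets `{a : δ ∉ a}`, so pushing `H` restricted to a positive set forward
along `m`, along `s`, or along a pairing of the two gives an ideal on `κ` of cofinality at most
`cof(H)`, hence a weakly selective one. The weak P-point property of the pushforward along the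
pairing of `(m, s)`, applied to the first coordinate, shrinks `A` so that `s(a) ≤ φ(m(a))` for some
`φ : κ → κ`. The weak Q-point property of the pushforward along `s`, applied to
`g(α) = sup φ[f(α)]`, shrinks it further so that `g(s(a)) < s(b)` whenever `s(a) < s(b)`. For such
`a, b`, `m(b) < f(s(a))` would give `φ(m(b)) ≤ g(s(a)) < s(b) ≤ φ(m(b))`; hence `f(s(a)) ≤ m(b)`,
that is, `f(s(a)) ⊆ b`.
-/

namespace PaperFormal

section Ordinals

variable {κ : Cardinal.{0}}

theorem sSup_lt_ord_of_isRegular (hκ : κ.IsRegular) {s : Set Ordinal.{0}}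
    (hs : #s < Cardinal.lift.{1} κ) (h : ∀ x ∈ s, x < κ.ord) : sSup s < κ.ord :=
  Ordinal.sSup_lt_of_lt_cof (by rwa [← Ordinal.lift_cof, hκ.cof_ord]) h

theorem sSup_image_Iio_lt_ord (hκ : κ.IsRegular) {φ : Ordinal.{0} → Ordinal.{0}}
    (hφ : ∀ γ, φ γ < κ.ord) {β : Ordinal.{0}} (hβ : β < κ.ord) : sSup (φ '' Iio β) < κ.ord :=
  sSup_lt_ord_of_isRegular hκ
    (mk_image_le.trans_lt (by rwa [mk_Iio_ordinal, lift_lt, ← lt_ord]))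
    (forall_mem_image.2 fun γ _ => hφ γ)

theorem supK_lt_ord (hκ : κ.IsRegular) {a : Set Ordinal.{0}} (ha : #a < Cardinal.lift.{1} κ) :
    supK κ a < κ.ord :=
  sSup_lt_ord_of_isRegular hκ ((mk_le_mk_of_subset inter_subset_left).trans_lt ha)
    fun _ hx => hx.2

theorem le_supK {a : Set Ordinal.{0}} {β : Ordinal.{0}} (hβa : β ∈ a) (hβ : β < κ.ord) :
    β ≤ supK κ a :=
  le_csSup ⟨κ.ord, fun _ hx => hx.2.le⟩ ⟨hβa, hβ⟩

noncomputable def minAbsent (κ : Cardinal.{0}) (a : Set Ordinal.{0}) : Ordinal.{0} :=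
  sInf (Iio κ.ord \ a)

theorem minAbsent_mem {a : Set Ordinal.{0}} (ha : #a < Cardinal.lift.{1} κ) :
    minAbsent κ a ∈ Iio κ.ord \ a := by
  refine csInf_mem (nonempty_of_not_subset fun hsub => ?_)
  have := (mk_le_mk_of_subset hsub).trans_lt ha
  rw [mk_Iio_ordinal, card_ord] at this
  exact this.false

theorem Iio_minAbsent_subset {a : Set Ordinal.{0}} (ha : #a < Cardinal.lift.{1} κ) :
    Iio (minAbsent κ a) ⊆ a := fun γ (hγ : γ < sInf _) => by
  by_contra hγa
  exact notMem_of_lt_csInf' hγ ⟨hγ.trans (minAbsent_mem ha).1, hγa⟩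

open Function in
theorem exists_pairing (hκ : ℵ₀ ≤ κ) :
    ∃ (pair : Ordinal.{0} × Ordinal.{0} → Ordinal.{0})
      (unpair : Ordinal.{0} → Ordinal.{0} × Ordinal.{0}),
      MapsTo pair (Iio κ.ord ×ˢ Iio κ.ord) (Iio κ.ord) ∧
      MapsTo unpair (Iio κ.ord) (Iio κ.ord ×ˢ Iio κ.ord) ∧
      LeftInvOn unpair pair (Iio κ.ord ×ˢ Iio κ.ord) := by
  have hmk : #↥(Iio κ.ord ×ˢ Iio κ.ord) = #(Iio κ.ord) := by
    rw [mk_congr (Equiv.Set.prod _ _), mk_prod, Cardinal.lift_id, mul_eq_self]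
    simpa using hκ
  obtain ⟨e⟩ := Cardinal.eq.mp hmk
  set pair := extend Subtype.val (fun x => (e x : Ordinal.{0})) 0
  set unpair := extend Subtype.val (fun ξ => (e.symm ξ : Ordinal.{0} × Ordinal.{0})) 0
  have hpair (x : ↥(Iio κ.ord ×ˢ Iio κ.ord)) : pair x = e x :=
    Subtype.val_injective.extend_apply _ _ x
  have hunpair (ξ : Iio κ.ord) : unpair ξ = e.symm ξ :=
    Subtype.val_injective.extend_apply _ _ ξ
  refine ⟨pair, unpair, fun x hx => ?_, fun ξ hξ => ?_, fun x hx => ?_⟩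
  · exact hpair ⟨x, hx⟩ ▸ (e ⟨x, hx⟩).2
  · exact hunpair ⟨ξ, hξ⟩ ▸ (e.symm ⟨ξ, hξ⟩).2
  · rw [hpair ⟨x, hx⟩, hunpair, e.symm_apply_apply]

end Ordinals

section LeastCard

variable {X : Type 1} {P : Set X → Prop} {F : Set X} {c : Cardinal.{0}}

theorem leastCard_le (hF : P F) (hc : #F ≤ Cardinal.lift.{1} c) : leastCard P ≤ c := by
  obtain ⟨d, hd⟩ := mem_range_lift_of_le hc
  exact (csInf_le' (s := {c | ∃ F, P F ∧ Cardinal.lift.{1} c = #F}) ⟨F, hF, hd⟩).trans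
    (lift_le.mp (hd ▸ hc))

theorem exists_lift_leastCard_eq (hF : P F) (hc : #F ≤ Cardinal.lift.{1} c) :
    ∃ F, P F ∧ Cardinal.lift.{1} (leastCard P) = #F := by
  obtain ⟨d, hd⟩ := mem_range_lift_of_le hc
  exact csInf_mem (s := {c | ∃ F, P F ∧ Cardinal.lift.{1} c = #F}) ⟨d, F, hF, hd⟩

end LeastCard

namespace IdealP

variable {κ lam : Cardinal.{0}} (H : IdealP κ lam)

theorem mk_mem_le :
    #H.mem ≤ Cardinal.lift.{1} ((2 : Cardinal.{0}) ^ (2 : Cardinal.{0}) ^ lam) := by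
  have hsub : H.mem ⊆ 𝒫 𝒫 Iio lam.ord := fun A hA a ha => (H.subset_pk A hA ha).1
  calc #H.mem ≤ #(𝒫 𝒫 Iio lam.ord) := mk_le_mk_of_subset hsub
    _ = Cardinal.lift.{1} ((2 : Cardinal.{0}) ^ (2 : Cardinal.{0}) ^ lam) := by
      simp [mk_powerset, Cardinal.lift_power]

theorem exists_cofinal_lift_cof_eq : ∃ X : Set (Set (Set Ordinal.{0})),
    (X ⊆ H.mem ∧ ∀ A, A ∈ H.mem ↔ ∃ B ∈ X, A ⊆ B) ∧ Cardinal.lift.{1} H.cof = #X :=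
  exists_lift_leastCard_eq
    ⟨subset_rfl, fun A =>
      ⟨fun hA => ⟨A, hA, subset_rfl⟩, fun ⟨B, hB, hAB⟩ => H.subset_mem B hB A hAB⟩⟩
    H.mk_mem_le

section Fibers

variable {A : Set (Set Ordinal.{0})}

theorem setOf_notMem_mem (hκ : 1 < κ) {δ : Ordinal.{0}} (hδ : δ < lam.ord) :
    {a ∈ smallSet κ lam | δ ∉ a} ∈ H.mem :=
  H.fine ⟨sep_subset _ _, {δ}, ⟨singleton_subset_iff.2 hδ, by simpa using hκ⟩,
    fun _ hb hδb => hb.2 (hδb rfl)⟩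

theorem empty_mem (hκ : 0 < κ) : ∅ ∈ H.mem :=
  H.fine ⟨empty_subset _, ∅, ⟨empty_subset _, by simpa using hκ⟩, fun _ hb => hb.elim⟩

theorem setOf_minAbsent_eq_mem (hκ : 1 < κ) (hlt : κ < lam) (hA : A ⊆ smallSet κ lam)
    (γ : Ordinal.{0}) : {a ∈ A | minAbsent κ a = γ} ∈ H.mem := by
  by_cases hγ : γ < κ.ord
  · refine H.subset_mem _ (H.setOf_notMem_mem hκ (hγ.trans (ord_lt_ord.2 hlt))) _ ?_
    rintro a ⟨ha, rfl⟩
    exact ⟨hA ha, (minAbsent_mem (hA ha).2).2⟩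
  · convert H.empty_mem (zero_lt_one.trans hκ)
    exact eq_empty_of_forall_notMem fun a ⟨ha, hγa⟩ => hγ (hγa ▸ (minAbsent_mem (hA ha).2).1)

theorem setOf_supK_eq_mem (hκ : κ.IsRegular) (hlt : κ < lam) (hA : A ⊆ smallSet κ lam)
    (β : Ordinal.{0}) : {a ∈ A | supK κ a = β} ∈ H.mem := by
  have hκ₁ : 1 < κ := one_lt_aleph0.trans_le hκ.aleph0_le
  by_cases hβ : β < κ.ord
  · have hsucc : Order.succ β < κ.ord := (isSuccLimit_ord hκ.aleph0_le).succ_lt hβ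
    refine H.subset_mem _ (H.setOf_notMem_mem hκ₁ (hsucc.trans (ord_lt_ord.2 hlt))) _ ?_
    rintro a ⟨ha, rfl⟩
    exact ⟨hA ha, fun hmem => (le_supK hmem hsucc).not_gt (Order.lt_succ _)⟩
  · convert H.empty_mem (zero_lt_one.trans hκ₁)
    exact eq_empty_of_forall_notMem fun a ⟨ha, hβa⟩ => hβ (hβa ▸ supK_lt_ord hκ (hA ha).2)

end Fibers

section Pushforward

variable {A : Set (Set Ordinal.{0})} {p : Set Ordinal.{0} → Ordinal.{0}}

def pushforward (A : Set (Set Ordinal.{0})) (p : Set Ordinal.{0} → Ordinal.{0})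
    (hA : A ∈ H.plus) (hp : ∀ a ∈ A, p a < κ.ord) (hfib : ∀ ξ, {a ∈ A | p a = ξ} ∈ H.mem) :
    IdealK κ where
  mem := {T | T ⊆ Iio κ.ord ∧ {a ∈ A | p a ∈ T} ∈ H.mem}
  subset_iio _ hT := hT.1
  singleton_mem ξ hξ := ⟨singleton_subset_iff.mpr hξ, hfib ξ⟩
  subset_mem _ hT _ hST := ⟨hST.trans hT.1, H.subset_mem _ hT.2 _ fun a ha => ⟨ha.1, hST ha.2⟩⟩
  sUnion_mem Y hY hYκ := by
    refine ⟨sUnion_subset fun T hT => (hY hT).1, ?_⟩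
    have hunion : {a ∈ A | p a ∈ ⋃₀ Y} = ⋃₀ ((fun T => {a ∈ A | p a ∈ T}) '' Y) := by
      ext a
      simp only [mem_sUnion, sUnion_image, mem_iUnion, mem_ofPred_eq, exists_prop]
      tauto
    rw [hunion]
    exact H.sUnion_mem _ (image_subset_iff.mpr fun T hT => (hY hT).2)
      (mk_image_le.trans_lt hYκ)
  ne_top h := hA.2 <| by
    convert h.2 using 1
    ext a
    exact ⟨fun ha => ⟨ha, hp a ha⟩, And.left⟩

variable {H} {hA : A ∈ H.plus} {hp : ∀ a ∈ A, p a < κ.ord}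
  {hfib : ∀ ξ, {a ∈ A | p a = ξ} ∈ H.mem}

theorem preimage_mem_plus {T : Set Ordinal.{0}} (hT : T ∈ (H.pushforward A p hA hp hfib).plus) :
    {a ∈ A | p a ∈ T} ∈ H.plus :=
  ⟨fun _ ha => hA.1 ha.1, fun h => hT.2 ⟨hT.1, h⟩⟩

theorem cof_pushforward_le : (H.pushforward A p hA hp hfib).cof ≤ H.cof := by
  obtain ⟨X, ⟨hXH, hXcof⟩, hX⟩ := H.exists_cofinal_lift_cof_eq
  let image (B : Set (Set Ordinal.{0})) : Set Ordinal.{0} := {ξ < κ.ord | {a ∈ A | p a = ξ} ⊆ B}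
  have himage : image '' X ⊆ (H.pushforward A p hA hp hfib).mem := by
    rintro _ ⟨B, hB, rfl⟩
    exact ⟨fun _ hξ => hξ.1, H.subset_mem B (hXH hB) _ fun a ha => ha.2.2 ⟨ha.1, rfl⟩⟩
  refine leastCard_le (F := image '' X) ⟨himage, fun T => ⟨fun hT => ?_, ?_⟩⟩ (hX ▸ mk_image_le)
  · obtain ⟨B, hB, hsub⟩ := (hXcof _).mp hT.2
    exact ⟨image B, mem_image_of_mem _ hB, fun ξ hξ =>
      ⟨hT.1 hξ, fun a ha => hsub ⟨ha.1, ha.2 ▸ hξ⟩⟩⟩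
  · rintro ⟨C, hC, hTC⟩
    exact IdealK.subset_mem _ C (himage hC) T hTC

theorem weaklySelective_pushforward (hcof : H.cof < nonK κ (fun J => WeaklySelective J)) :
    WeaklySelective (H.pushforward A p hA hp hfib) := by
  by_contra hJ
  have : nonK κ (fun J => WeaklySelective J) ≤ (H.pushforward A p hA hp hfib).cof :=
    csInf_le' ⟨_, rfl, hJ⟩
  exact (this.trans cof_pushforward_le).not_gt hcof

end Pushforward

section Thinning

variable {H} (hcof : H.cof < nonK κ (fun J => WeaklySelective J))
  {A : Set (Set Ordinal.{0})} (hA : A ∈ H.plus)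
include hcof hA

theorem exists_plus_subset_le_comp (hκ : κ.IsRegular) {p q : Set Ordinal.{0} → Ordinal.{0}}
    (hp : ∀ a ∈ A, p a < κ.ord) (hq : ∀ a ∈ A, q a < κ.ord)
    (hfib : ∀ γ, {a ∈ A | p a = γ} ∈ H.mem) :
    ∃ B ∈ H.plus, B ⊆ A ∧ ∃ φ : Ordinal.{0} → Ordinal.{0},
      (∀ γ, φ γ < κ.ord) ∧ ∀ a ∈ B, q a ≤ φ (p a) := by
  obtain ⟨pair, unpair, hpair, hunpair, hinv⟩ := exists_pairing hκ.aleph0_le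
  let pq a := pair (p a, q a)
  have hpqA (a) (ha : a ∈ A) : (p a, q a) ∈ Iio κ.ord ×ˢ Iio κ.ord := ⟨hp a ha, hq a ha⟩
  have hunpair_pq (a) (ha : a ∈ A) : unpair (pq a) = (p a, q a) := hinv (hpqA a ha)
  have hfib_pq (ξ) : {a ∈ A | pq a = ξ} ∈ H.mem :=
    H.subset_mem _ (hfib (unpair ξ).1) _ fun a ⟨ha, hξ⟩ => ⟨ha, by rw [← hξ, hunpair_pq a ha]⟩
  let J := H.pushforward A pq hA (fun a ha => hpair (hpqA a ha)) hfib_pq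
  -- the weak P-point property, applied to the first coordinate, makes each `p`-value carry
  -- fewer than `κ` values of `q`
  have hJfib (γ) : {ξ ∈ Iio κ.ord | (unpair ξ).1 = γ} ∈ J.mem :=
    ⟨sep_subset _ _, H.subset_mem _ (hfib γ) _ fun a ⟨ha, _, hγ⟩ =>
      ⟨ha, by rwa [hunpair_pq a ha] at hγ⟩⟩
  obtain ⟨S, hS, -, hSsmall⟩ := (weaklySelective_pushforward hcof).1 (Iio κ.ord)
    ⟨subset_rfl, J.ne_top⟩ (fun ξ => (unpair ξ).1) (fun ξ hξ => (hunpair hξ).1) hJfib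
  let values (γ : Ordinal.{0}) := (fun ξ => (unpair ξ).2) '' {ξ ∈ S | (unpair ξ).1 = γ}
  have hvalues (γ) : ∀ x ∈ values γ, x < κ.ord :=
    forall_mem_image.2 fun ξ hξ => (hunpair (hS.1 hξ.1)).2
  refine ⟨_, preimage_mem_plus hS, fun a ha => ha.1, fun γ => sSup (values γ),
    fun γ => sSup_lt_ord_of_isRegular hκ (mk_image_le.trans_lt (hSsmall γ)) (hvalues γ),
    fun a ha => le_csSup ⟨κ.ord, fun x hx => (hvalues _ x hx).le⟩ ⟨pq a, ?_⟩⟩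
  simpa [hunpair_pq a ha.1] using ha.2

theorem exists_plus_subset_forall_lt_of_lt {q : Set Ordinal.{0} → Ordinal.{0}}
    (hq : ∀ a ∈ A, q a < κ.ord) (hfib : ∀ β, {a ∈ A | q a = β} ∈ H.mem)
    {g : Ordinal.{0} → Ordinal.{0}} (hg : g ∈ funOn κ) :
    ∃ B ∈ H.plus, B ⊆ A ∧ ∀ a ∈ B, ∀ b ∈ B, q a < q b → g (q a) < q b := by
  let J := H.pushforward A q hA hq hfib
  obtain ⟨S, hS, -, hSg⟩ := (weaklySelective_pushforward hcof).2 (Iio κ.ord)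
    ⟨subset_rfl, J.ne_top⟩ g hg
  exact ⟨_, preimage_mem_plus hS, fun a ha => ha.1, fun a ha b hb => hSg _ ha.2 _ hb.2⟩

end Thinning

end IdealP

open IdealP in
theorem chi_point_like_general (κ lam : Cardinal.{0}) (hreg : κ.IsRegular)
    (hlt : κ < lam) (H : IdealP κ lam)
    (hcof : H.cof < nonK κ (fun J => WeaklySelective J)) :
    ∀ f ∈ funOn κ, ∀ A ∈ H.plus, ∃ B ∈ H.plus, B ⊆ A ∧
      ∀ a ∈ B, ∀ b ∈ B, supK κ a < supK κ b → Iio (f (supK κ a)) ⊆ b := by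
  intro f hf A hA
  have hsmall {a} (ha : a ∈ A) : #a < Cardinal.lift.{1} κ := (hA.1 ha).2
  obtain ⟨A₁, hA₁, hA₁A, φ, hφ, hsupK_le⟩ := exists_plus_subset_le_comp hcof hA hreg
    (fun a ha => (minAbsent_mem (hsmall ha)).1) (fun a ha => supK_lt_ord hreg (hsmall ha))
    (H.setOf_minAbsent_eq_mem (one_lt_aleph0.trans_le hreg.aleph0_le) hlt hA.1)
  let g (α : Ordinal.{0}) := sSup (φ '' Iio (f α))
  obtain ⟨B, hB, hBA₁, hsparse⟩ := exists_plus_subset_forall_lt_of_lt hcof hA₁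
    (fun a ha => supK_lt_ord hreg (hsmall (hA₁A ha)))
    (H.setOf_supK_eq_mem hreg hlt (hA₁A.trans hA.1))
    (g := g) fun α hα => sSup_image_Iio_lt_ord hreg hφ (hf α hα)
  refine ⟨B, hB, hBA₁.trans hA₁A, fun a ha b hb hab => ?_⟩
  have hf_le : f (supK κ a) ≤ minAbsent κ b := by
    by_contra! hlt'
    have hφ_le : φ (minAbsent κ b) ≤ g (supK κ a) :=
      le_csSup ⟨κ.ord, forall_mem_image.2 fun γ _ => (hφ γ).le⟩ (mem_image_of_mem φ hlt')
    exact ((hsparse a ha b hb hab).trans_le (hsupK_le b (hBA₁ hb))).not_ge hφ_le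
  exact (Iio_subset_Iio hf_le).trans (Iio_minAbsent_subset (hsmall (hA₁A (hBA₁ hb))))

/-- Suppose `2^{<κ} = κ` and `H` is an ideal on `P_κ(λ)` with
`cof(H) < non_κ(weakly selective)`. Then for every `f : κ → κ` and every `A ∈ H⁺` there is
`B ∈ H⁺ ∩ P(A)` such that `f(∪(a∩κ)) ⊆ b` for all `a, b ∈ B` with `∪(a∩κ) < ∪(b∩κ)`. -/
theorem chi_point_like (κ lam : Cardinal.{0}) (hreg : κ.IsRegular) (huc : ℵ₀ < κ)
    (hlt : κ < lam) (h2 : (2 : Cardinal.{0}) ^< κ = κ) (H : IdealP κ lam)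
    (hcof : H.cof < nonK κ (fun J => WeaklySelective J)) :
    ∀ f ∈ funOn κ, ∀ A ∈ H.plus, ∃ B ∈ H.plus, B ⊆ A ∧
      ∀ a ∈ B, ∀ b ∈ B, supK κ a < supK κ b → Iio (f (supK κ a)) ⊆ b :=
  chi_point_like_general κ lam hreg hlt H hcof
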